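/- A linear relation A is quasi-null (⟨f,g⟩ = 0 for all (f,g) ∈ A) if and only if its Krein transform K(A) is both symmetric and isometric (‖k‖ = ‖h‖ for all (h,k) ∈ K(A)). -/

import Mathlib

open scoped InnerProductSpace

variable {H : Type*} [NormedAddCommGroup H] [InnerProductSpace ℂ H]

/-- The adjoint of a linear relation `T ⊆ H × H`:
`T* = {(h,k) : ⟨k,f⟩ = ⟨h,g⟩ for all (f,g) ∈ T}` (inner product antilinear in the
first entry). -/
def adjointRel (T : Submodule ℂ (H × H)) : Submodule ℂ (H × H) where
  carrier := {p | ∀ q ∈ T, (inner ℂ p.2 q.1 : ℂ) = inner ℂ p.1 q.2}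
  add_mem' := by
    intro a b ha hb q hq
    simp only [Prod.fst_add, Prod.snd_add, inner_add_left]
    rw [ha q hq, hb q hq]
  zero_mem' := by intro q hq; simp
  smul_mem' := by
    intro c p hp q hq
    simp only [Prod.smul_fst, Prod.smul_snd, inner_smul_left]
    rw [hp q hq]

/-- The map `(f,g) ↦ (f+g, f−g)` defining the Krein transform. -/
noncomputable def kreinMap : (H × H) →ₗ[ℂ] (H × H) :=
  (LinearMap.fst ℂ H H + LinearMap.snd ℂ H H).prod
    (LinearMap.fst ℂ H H - LinearMap.snd ℂ H H)

/-- The Krein transform `K(T) = {(f+g, f−g) : (f,g) ∈ T}` of a linear relation. -/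
noncomputable def krein (T : Submodule ℂ (H × H)) : Submodule ℂ (H × H) :=
  T.map kreinMap

/-- The inverse relation map `(f,g) ↦ (g,f)`. -/
def invMap : (H × H) →ₗ[ℂ] (H × H) :=
  (LinearMap.snd ℂ H H).prod (LinearMap.fst ℂ H H)

/-- The negation map `(f,g) ↦ (f,−g)`, so that `T.map negMap = -T`. -/
def negMap : (H × H) →ₗ[ℂ] (H × H) :=
  (LinearMap.fst ℂ H H).prod (-(LinearMap.snd ℂ H H))

/-- The map `(f,g) ↦ (g,−f)`, so that `T.map negInvMap = -T⁻¹`. -/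
def negInvMap : (H × H) →ₗ[ℂ] (H × H) :=
  (LinearMap.snd ℂ H H).prod (-(LinearMap.fst ℂ H H))

/-- The orthogonal complement of a linear relation inside `H × H`, with respect to
the product inner product. -/
def orthRel (T : Submodule ℂ (H × H)) : Submodule ℂ (H × H) where
  carrier := {p | ∀ q ∈ T, (inner ℂ q.1 p.1 : ℂ) + inner ℂ q.2 p.2 = 0}
  add_mem' := by
    intro a b ha hb q hq
    simp only [Prod.fst_add, Prod.snd_add, inner_add_right]
    linear_combination ha q hq + hb q hq
  zero_mem' := by intro q hq; simp
  smul_mem' := by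
    intro c p hp q hq
    simp only [Prod.smul_fst, Prod.smul_snd, inner_smul_right]
    linear_combination c * hp q hq
/-!
For `kreinMap p = (f + g, f - g)` one has `⟪k, h'⟫ - ⟪h, k'⟫ = 2 (⟪f, g'⟫ - ⟪g, f'⟫)` and
`‖f - g‖² - ‖f + g‖² = -4 Re ⟪f, g⟫`, so `K(A)` is symmetric iff `A` is, and isometric iff
`Re ⟪f, g⟫` vanishes on `A`. Symmetry of `A` makes `⟪f, g⟫` real; conversely, a quasi-null `A`
is symmetric by complex polarization.
-/

namespace LinearRelation

variable (p q : H × H)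

lemma kreinMap_fst : (kreinMap p).1 = p.1 + p.2 := rfl

lemma kreinMap_snd : (kreinMap p).2 = p.1 - p.2 := rfl

lemma inner_kreinMap_sub_inner_kreinMap :
    (⟪(kreinMap p).2, (kreinMap q).1⟫_ℂ - ⟪(kreinMap p).1, (kreinMap q).2⟫_ℂ) =
      2 * (⟪p.1, q.2⟫_ℂ - ⟪p.2, q.1⟫_ℂ) := by
  simp only [kreinMap_fst, kreinMap_snd, inner_add_left, inner_add_right, inner_sub_left,
    inner_sub_right]
  ring

lemma norm_kreinMap_snd_sq_sub_norm_kreinMap_fst_sq :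
    ‖(kreinMap p).2‖ ^ 2 - ‖(kreinMap p).1‖ ^ 2 = -4 * RCLike.re ⟪p.1, p.2⟫_ℂ := by
  rw [kreinMap_fst, kreinMap_snd, @norm_sub_sq ℂ, @norm_add_sq ℂ]
  ring

variable (T : Submodule ℂ (H × H))

theorem krein_le_adjointRel_krein_iff : krein T ≤ adjointRel (krein T) ↔ T ≤ adjointRel T := by
  have key (p q : H × H) :
      ⟪(kreinMap p).2, (kreinMap q).1⟫_ℂ = ⟪(kreinMap p).1, (kreinMap q).2⟫_ℂ ↔
        ⟪p.2, q.1⟫_ℂ = ⟪p.1, q.2⟫_ℂ := by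
    rw [← sub_eq_zero, inner_kreinMap_sub_inner_kreinMap, mul_eq_zero, sub_eq_zero]
    simp only [two_ne_zero, false_or]
    exact eq_comm
  constructor
  · intro h p hp q hq
    exact (key p q).1 (h (Submodule.mem_map_of_mem hp) _ (Submodule.mem_map_of_mem hq))
  · rintro h _ ⟨p, hp, rfl⟩ _ ⟨q, hq, rfl⟩
    exact (key p q).2 (h hp q hq)

theorem krein_isometric_iff :
    (∀ q ∈ krein T, ‖q.2‖ = ‖q.1‖) ↔ ∀ p ∈ T, RCLike.re ⟪p.1, p.2⟫_ℂ = 0 := by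
  have key (p : H × H) : ‖(kreinMap p).2‖ = ‖(kreinMap p).1‖ ↔ RCLike.re ⟪p.1, p.2⟫_ℂ = 0 := by
    rw [← sq_eq_sq₀ (norm_nonneg _) (norm_nonneg _), ← sub_eq_zero,
      norm_kreinMap_snd_sq_sub_norm_kreinMap_fst_sq]
    simp
  simp only [krein, Submodule.mem_map, forall_exists_index, and_imp, forall_apply_eq_imp_iff₂]
  exact forall₂_congr fun p _ => key p

variable {T}

/-- Complex polarization: a sesquilinear form whose quadratic form vanishes is zero. -/
theorem inner_fst_snd_eq_zero_of_quasiNull (hT : ∀ p ∈ T, ⟪p.1, p.2⟫_ℂ = 0) {p q : H × H}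
    (hp : p ∈ T) (hq : q ∈ T) : ⟪p.1, q.2⟫_ℂ = 0 := by
  have h₁ := hT (p + q) (T.add_mem hp hq)
  have h₂ := hT (p + Complex.I • q) (T.add_mem hp (T.smul_mem _ hq))
  simp only [Prod.fst_add, Prod.snd_add, Prod.smul_fst, Prod.smul_snd, inner_add_left,
    inner_add_right, inner_smul_left, inner_smul_right, hT p hp, hT q hq, Complex.conj_I] at h₁ h₂
  linear_combination h₁ / 2 - Complex.I / 2 * h₂ +
    (⟪p.1, q.2⟫_ℂ - ⟪q.1, p.2⟫_ℂ) / 2 * Complex.I_sq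

theorem le_adjointRel_of_quasiNull (hT : ∀ p ∈ T, ⟪p.1, p.2⟫_ℂ = 0) : T ≤ adjointRel T := by
  intro p hp q hq
  rw [← inner_conj_symm, inner_fst_snd_eq_zero_of_quasiNull hT hq hp,
    inner_fst_snd_eq_zero_of_quasiNull hT hp hq, map_zero]

theorem im_inner_fst_snd_eq_zero_of_le_adjointRel (hT : T ≤ adjointRel T) {p : H × H}
    (hp : p ∈ T) : Complex.im ⟪p.1, p.2⟫_ℂ = 0 := by
  have h : ⟪p.2, p.1⟫_ℂ = ⟪p.1, p.2⟫_ℂ := hT hp p hp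
  rw [← inner_conj_symm] at h
  exact Complex.conj_eq_iff_im.1 h

end LinearRelation

open LinearRelation in
/-- `A` is quasi-null iff its Krein transform is symmetric and isometric. -/
theorem quasiNull_iff_krein_symmetric_isometric (A : Submodule ℂ (H × H)) :
    (∀ p ∈ A, (inner ℂ p.1 p.2 : ℂ) = 0) ↔
      (krein A ≤ adjointRel (krein A) ∧ ∀ q ∈ krein A, ‖q.2‖ = ‖q.1‖) := by
  rw [krein_le_adjointRel_krein_iff, krein_isometric_iff]
  constructor
  · intro hA
    exact ⟨le_adjointRel_of_quasiNull hA, fun p hp => by simp [hA p hp]⟩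
  · rintro ⟨hsymm, hiso⟩ p hp
    exact Complex.ext (hiso p hp) (im_inner_fst_snd_eq_zero_of_le_adjointRel hsymm hp)
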